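/- arXiv:2509.07262 — 8 statements merged into one kernel-verified Lean document; each statement's English description precedes it below -/
import Mathlib

section
/- Let Γ be a group and 𝒳 a set of subgroups of Γ. If there exists a nonzero finitely supported function a : Γ → ℂ such that for every g ∈ Γ and every X ∈ 𝒳 the sum ∑_{h ∈ gX} a(h) equals 0, then there also exists a nonzero finitely supported function b : Γ → ℤ with the same property: ∑_{h ∈ gX} b(h) = 0 for all g ∈ Γ and X ∈ 𝒳. -/
open scoped Pointwise

/-- If there is a nonzero finitely supported complex function whose sums over all
cosets `g • X`, `X ∈ 𝒳`, vanish, then there is a nonzero finitely supported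
integer-valued function with the same property. -/
theorem stmt_0 {Γ : Type*} [Group Γ] (𝒳 : Set (Subgroup Γ))
    (a : Γ →₀ ℂ) (ha : a ≠ 0)
    (hsum : ∀ g : Γ, ∀ X ∈ 𝒳, ∑ᶠ h ∈ (g • (X : Set Γ)), a h = 0) :
    ∃ b : Γ →₀ ℤ, b ≠ 0 ∧ ∀ g : Γ, ∀ X ∈ 𝒳, ∑ᶠ h ∈ (g • (X : Set Γ)), b h = 0 := by
  classical
  set S := a.support with hS
  let ι := {h // h ∈ S}
  let κ := {T // T ∈ S.powerset}
  let Cond : Finset Γ → Prop := fun T =>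
    ∃ g : Γ, ∃ X ∈ 𝒳, (T : Set Γ) = (g • (X : Set Γ)) ∩ (S : Set Γ)
  let M : Matrix κ ι ℚ := fun T h => if Cond T.1 ∧ h.1 ∈ T.1 then 1 else 0
  let x : ι → ℂ := fun h => a h.1
  have hx : x ≠ 0 := by
    obtain ⟨g, hg⟩ : ∃ g, a g ≠ 0 := by
      by_contra h
      push_neg at h
      exact ha (Finsupp.ext fun g => h g)
    intro h0
    exact hg (congrFun h0 ⟨g, Finsupp.mem_support_iff.mpr hg⟩)
  -- converting subtype sums to finset sums
  have key : ∀ {K : Type} [Field K], ∀ (y : ι → K), ∀ T ⊆ S,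
      ∑ h : ι, (if (h : Γ) ∈ T then y h else 0) =
        ∑ g ∈ T, (fun g => if hg : g ∈ S then y ⟨g, hg⟩ else 0) g := by
    intro K _ y T hT
    have h1 : ∑ h : ι, (if (h : Γ) ∈ T then y h else 0) =
        ∑ h : ι, (fun g => if hg : g ∈ S then
          (if g ∈ T then y ⟨g, hg⟩ else 0) else 0) (h : Γ) := by
      apply Finset.sum_congr rfl
      intro h _
      simp [h.2]
    rw [h1, Finset.univ_eq_attach, Finset.sum_attach S
      (fun g => if hg : g ∈ S then (if g ∈ T then y ⟨g, hg⟩ else 0) else 0)]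
    symm
    calc ∑ g ∈ T, (fun g => if hg : g ∈ S then y ⟨g, hg⟩ else 0) g
        = ∑ g ∈ T, (fun g => if hg : g ∈ S then
            (if g ∈ T then y ⟨g, hg⟩ else 0) else 0) g := by
          apply Finset.sum_congr rfl
          intro g hg
          simp [hT hg, hg]
      _ = ∑ g ∈ S, (fun g => if hg : g ∈ S then
            (if g ∈ T then y ⟨g, hg⟩ else 0) else 0) g := by
          apply Finset.sum_subset hT
          intro g _ hgT
          simp [hgT]
  -- x is in the kernel of the complex matrix
  have hMx : (M.map (algebraMap ℚ ℂ)).mulVec x = 0 := by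
    funext T
    show ∑ h : ι, (algebraMap ℚ ℂ) (M T h) * x h = 0
    by_cases hT : Cond T.1
    · obtain ⟨g, X, hX, hTeq⟩ := hT
      have hc : Cond T.1 := ⟨g, X, hX, hTeq⟩
      have h1 : ∑ h : ι, (algebraMap ℚ ℂ) (M T h) * x h
          = ∑ h : ι, (if (h : Γ) ∈ T.1 then x h else 0) := by
        apply Finset.sum_congr rfl
        intro h _
        by_cases hh : (h : Γ) ∈ T.1 <;> simp [M, hh, hc]
      rw [h1, key x T.1 (Finset.mem_powerset.mp T.2)]
      have h2 : ∑ g ∈ T.1, (fun g => if hg : g ∈ S then x ⟨g, hg⟩ else 0) g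
          = ∑ g ∈ T.1, a g := by
        apply Finset.sum_congr rfl
        intro g hg
        by_cases hgS : g ∈ S
        · simp [hgS, x]
        · have : a g = 0 := by
            by_contra h
            exact hgS (Finsupp.mem_support_iff.mpr h)
          simp [hgS, this]
      rw [h2, ← finsum_mem_eq_sum_of_inter_support_eq (fun g => a g)
        (s := g • (X : Set Γ)) (t := T.1) ?_]
      · exact hsum g X hX
      · have hsupp : Function.support (fun g => a g) = (S : Set Γ) := by
          ext g; simp [hS, Finsupp.mem_support_iff]
        rw [hsupp, hTeq]
        ext g
        simp only [Set.mem_inter_iff]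
        tauto
    · have hz : ∀ h : ι, (algebraMap ℚ ℂ) (M T h) * x h = 0 := by
        intro h
        simp [M, hT]
      exact Finset.sum_eq_zero fun h _ => hz h
  -- hence det of (M.transpose * M) over ℂ is zero, so also over ℚ
  have hdetC : ((M.transpose * M).map (algebraMap ℚ ℂ)).det = 0 := by
    rw [← Matrix.exists_mulVec_eq_zero_iff]
    refine ⟨x, hx, ?_⟩
    rw [Matrix.map_mul, ← Matrix.mulVec_mulVec, hMx, Matrix.mulVec_zero]
  have hdetQ : (M.transpose * M).det = 0 := by
    apply RingHom.injective (algebraMap ℚ ℂ)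
    rw [map_zero, RingHom.map_det]
    exact hdetC
  obtain ⟨y, hy0, hNy⟩ := Matrix.exists_mulVec_eq_zero_iff.mpr hdetQ
  have hMy : M.mulVec y = 0 := by
    have hker := Matrix.ker_mulVecLin_transpose_mul_self M
    have hmem : y ∈ LinearMap.ker (M.transpose * M).mulVecLin := by
      rw [LinearMap.mem_ker, Matrix.mulVecLin_apply]
      exact hNy
    rw [hker, LinearMap.mem_ker, Matrix.mulVecLin_apply] at hmem
    exact hmem
  -- clear denominators
  obtain ⟨d, hd⟩ := IsLocalization.exist_integer_multiples (nonZeroDivisors ℤ)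
    Finset.univ y
  choose z hz using fun i => hd i (Finset.mem_univ i)
  have hzq : ∀ i : ι, (z i : ℚ) = (d : ℤ) • y i := by
    intro i
    exact_mod_cast hz i
  have hdne : (d : ℤ) ≠ 0 := nonZeroDivisors.coe_ne_zero d
  -- define b
  let bfun : Γ → ℤ := fun g => if hg : g ∈ S then z ⟨g, hg⟩ else 0
  have hbsupp : ∀ g, bfun g ≠ 0 → g ∈ S := by
    intro g hg
    by_contra h
    exact hg (by simp [bfun, h])
  let b : Γ →₀ ℤ := Finsupp.onFinset S bfun hbsupp
  have hbval : ∀ (g : Γ) (hg : g ∈ S), b g = z ⟨g, hg⟩ := by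
    intro g hg
    simp [b, bfun, hg]
  refine ⟨b, ?_, ?_⟩
  · -- b ≠ 0
    obtain ⟨i, hi⟩ : ∃ i, y i ≠ 0 := by
      by_contra h
      push_neg at h
      exact hy0 (funext h)
    intro hb0
    have hbi : b i.1 = 0 := by rw [hb0]; rfl
    have hz0 : z i = 0 := by
      have := hbval i.1 i.2
      rw [hbi] at this
      simpa using this.symm
    have h0 : (d : ℤ) • y i = 0 := by
      rw [← hzq i, hz0]
      simp
    rcases smul_eq_zero.mp h0 with h | h
    · exact hdne h
    · exact hi h
  · -- coset sums vanish
    intro g X hX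
    set T0 : Finset Γ := S.filter (fun h => h ∈ g • (X : Set Γ)) with hT0
    have hT0sub : T0 ⊆ S := Finset.filter_subset _ _
    have hT0set : (T0 : Set Γ) = (g • (X : Set Γ)) ∩ (S : Set Γ) := by
      ext h
      simp [hT0, And.comm]
    have hred : ∑ᶠ h ∈ (g • (X : Set Γ)), (b h : ℤ) = ∑ h ∈ T0, b h := by
      apply finsum_mem_eq_sum_of_inter_support_eq
      have hsub : Function.support (fun h => (b h : ℤ)) ⊆ (S : Set Γ) := by
        intro h hh
        exact hbsupp h hh
      ext h
      simp only [Set.mem_inter_iff, hT0set]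
      constructor
      · rintro ⟨h1, h2⟩
        exact ⟨⟨h1, hsub h2⟩, h2⟩
      · rintro ⟨⟨h1, _⟩, h2⟩
        exact ⟨h1, h2⟩
    rw [hred]
    have hrow : ∑ h ∈ T0, ((b h : ℚ)) = 0 := by
      have hT0cond : Cond T0 := ⟨g, X, hX, hT0set⟩
      have hTκ : T0 ∈ S.powerset := Finset.mem_powerset.mpr hT0sub
      have hrow0 : ∑ h : ι, M ⟨T0, hTκ⟩ h * y h = 0 := congrFun hMy ⟨T0, hTκ⟩
      have h1 : ∑ h : ι, M ⟨T0, hTκ⟩ h * y h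
          = ∑ h : ι, (if (h : Γ) ∈ T0 then y h else 0) := by
        apply Finset.sum_congr rfl
        intro h _
        by_cases hh : (h : Γ) ∈ T0 <;> simp [M, hh, hT0cond]
      rw [h1, key y T0 hT0sub] at hrow0
      calc ∑ h ∈ T0, ((b h : ℚ))
          = ∑ h ∈ T0, (d : ℤ) • (fun g => if hg : g ∈ S then y ⟨g, hg⟩ else 0) h := by
            apply Finset.sum_congr rfl
            intro h hh
            have hhS : h ∈ S := hT0sub hh
            rw [hbval h hhS, hzq ⟨h, hhS⟩]
            simp [hhS]
        _ = (d : ℤ) • ∑ h ∈ T0, (fun g => if hg : g ∈ S then y ⟨g, hg⟩ else 0) h := by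
            rw [Finset.smul_sum]
        _ = 0 := by rw [hrow0]; simp
    exact_mod_cast hrow
end

section
/- Let Γ be a group, Λ ⊆ Γ a subgroup, 𝒳 a set of subgroups of Γ that is invariant under conjugation, and a : Γ → ℂ a finitely supported function with support contained in Λ. Then ∑_{h ∈ gX} a(h) = 0 for all g ∈ Γ and X ∈ 𝒳 if and only if ∑_{h ∈ λ(Λ ∩ X)} a(h) = 0 for all λ ∈ Λ and X ∈ 𝒳. -/
open scoped Pointwise

/-- For a conjugation-invariant family `𝒳` of subgroups and a finitely supported
function `a` supported in a subgroup `Λ`, the vanishing of all coset sums over `Γ`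
is equivalent to the vanishing of all coset sums over `Λ` of the subgroups `Λ ∩ X`. -/
theorem stmt_2 {Γ : Type*} [Group Γ] (Λ : Subgroup Γ) (𝒳 : Set (Subgroup Γ))
    (hconj : ∀ X ∈ 𝒳, ∀ g : Γ, Subgroup.map (MulAut.conj g).toMonoidHom X ∈ 𝒳)
    (a : Γ →₀ ℂ) (hsupp : ∀ g : Γ, a g ≠ 0 → g ∈ Λ) :
    (∀ g : Γ, ∀ X ∈ 𝒳, ∑ᶠ h ∈ (g • (X : Set Γ)), a h = 0) ↔
    (∀ l ∈ Λ, ∀ X ∈ 𝒳, ∑ᶠ h ∈ (l • ((Λ : Set Γ) ∩ (X : Set Γ))), a h = 0) := by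
  have key : ∀ l : Γ, l ∈ Λ → ∀ X : Subgroup Γ,
      ∑ᶠ h ∈ (l • ((Λ : Set Γ) ∩ (X : Set Γ))), a h = ∑ᶠ h ∈ (l • (X : Set Γ)), a h := by
    intro l hl X
    apply finsum_mem_inter_support_eq'
    intro x hx
    have hxΛ : x ∈ Λ := hsupp x hx
    simp only [Set.mem_smul_set_iff_inv_smul_mem, smul_eq_mul, Set.mem_inter_iff,
      SetLike.mem_coe]
    constructor
    · rintro ⟨-, h⟩; exact h
    · intro h; exact ⟨Λ.mul_mem (Λ.inv_mem hl) hxΛ, h⟩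
  constructor
  · intro H l hl X hX
    rw [key l hl X]
    exact H l X hX
  · intro H g X hX
    by_cases hne : ∃ lam, lam ∈ (g • (X : Set Γ)) ∧ lam ∈ Λ
    · obtain ⟨lam, hlam, hlamΛ⟩ := hne
      have hcoset : g • (X : Set Γ) = lam • (X : Set Γ) := by
        rw [leftCoset_eq_iff]
        exact (Set.mem_smul_set_iff_inv_smul_mem.mp hlam)
      rw [hcoset, ← key lam hlamΛ X]
      exact H lam hlamΛ X hX
    · apply finsum_mem_eq_zero_of_forall_eq_zero
      intro x hx
      by_contra hax
      exact hne ⟨x, hx, hsupp x hax⟩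
end

section
/- Let Γ be a group and {X₁, …, X_m} a finite family of finite subgroups of Γ that is invariant under conjugation (for every g ∈ Γ and every i, gX_ig⁻¹ equals some X_j). Then every element of the subgroup N generated by X₁ ∪ ⋯ ∪ X_m can be written as a product g₁⋯g_k with k ≤ m and each g_i ∈ X₁ ∪ ⋯ ∪ X_m. In particular, N is finite. -/
/-!
Write an element of `N` as a word in the `Xᵢ`, each letter tagged by a subgroup containing
it. If two letters `a, b` carry the same tag `i`, then `a · u · b = (a b) · (b⁻¹ u b)`, and by
conjugation invariance `b⁻¹ u b` is again a word of the same length as `u`; so the word gets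
shorter. Hence every element is a word whose tags are pairwise distinct, which has length at
most `m`, and there are only finitely many such words.
-/

theorem List.Sublist.exists_eq_append_cons_append_cons {α : Type*} {p q : α} {l : List α}
    (h : [p, q].Sublist l) : ∃ A M C, l = A ++ p :: (M ++ q :: C) := by
  obtain ⟨r₁, r₂, rfl, hp, hq⟩ := List.cons_sublist_iff.1 h
  obtain ⟨A, M₁, rfl⟩ := List.append_of_mem hp
  obtain ⟨M₂, C, rfl⟩ := List.append_of_mem (List.singleton_sublist.1 hq)
  exact ⟨A, M₁ ++ M₂, C, by simp⟩

namespace Subgroup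

variable {Γ ι : Type*} [Group Γ] (X : ι → Subgroup Γ)

def wordProd (w : List (Σ i, X i)) : Γ := (w.map fun e => (e.2 : Γ)).prod

@[simp]
lemma wordProd_nil : wordProd X [] = 1 := rfl

@[simp]
lemma wordProd_cons (e : Σ i, X i) (w : List (Σ i, X i)) :
    wordProd X (e :: w) = e.2 * wordProd X w := List.prod_cons

@[simp]
lemma wordProd_append (v w : List (Σ i, X i)) :
    wordProd X (v ++ w) = wordProd X v * wordProd X w := by
  simp [wordProd, List.prod_append]

lemma exists_wordProd_eq_of_mem_closure {n : Γ} (hn : n ∈ closure (⋃ i, (X i : Set Γ))) :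
    ∃ w, wordProd X w = n := by
  induction hn using closure_induction_left with
  | one => exact ⟨[], rfl⟩
  | mul_left x hx y _ ih =>
    obtain ⟨i, hi⟩ := Set.mem_iUnion.1 hx
    obtain ⟨w, rfl⟩ := ih
    exact ⟨⟨i, ⟨x, hi⟩⟩ :: w, rfl⟩
  | inv_mul_cancel x hx y _ ih =>
    obtain ⟨i, hi⟩ := Set.mem_iUnion.1 hx
    obtain ⟨w, rfl⟩ := ih
    exact ⟨⟨i, ⟨x⁻¹, inv_mem hi⟩⟩ :: w, rfl⟩

variable {X}

lemma exists_wordProd_eq_conj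
    (hconj : ∀ (g : Γ) (i : ι), ∃ j, (X i).map (MulAut.conj g).toMonoidHom ≤ X j)
    (g : Γ) (w : List (Σ i, X i)) :
    ∃ w', w'.length = w.length ∧ wordProd X w' = g * wordProd X w * g⁻¹ := by
  induction w with
  | nil => exact ⟨[], rfl, by simp⟩
  | cons e w ih =>
    obtain ⟨w', hlen, hprod⟩ := ih
    obtain ⟨j, hj⟩ := hconj g e.1
    refine ⟨⟨j, ⟨g * e.2 * g⁻¹, hj ⟨e.2, e.2.2, rfl⟩⟩⟩ :: w', by simp [hlen], ?_⟩
    simp only [wordProd_cons, hprod]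
    group

lemma exists_shorter_wordProd_eq_of_not_nodup
    (hconj : ∀ (g : Γ) (i : ι), ∃ j, (X i).map (MulAut.conj g).toMonoidHom ≤ X j)
    {w : List (Σ i, X i)} (hw : ¬(w.map Sigma.fst).Nodup) :
    ∃ w', w'.length < w.length ∧ wordProd X w' = wordProd X w := by
  obtain ⟨i, hii⟩ := not_forall_not.1 (mt List.nodup_iff_sublist.2 hw)
  obtain ⟨pq, hsub, hpq⟩ := List.sublist_map_iff.1 hii
  obtain ⟨⟨i₁, a⟩, ⟨i₂, b⟩, rfl⟩ :=
    List.length_eq_two.1 (by simpa using (congrArg List.length hpq).symm)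
  obtain ⟨rfl, rfl⟩ : i = i₁ ∧ i = i₂ := by simpa using hpq
  obtain ⟨A, M, C, rfl⟩ := hsub.exists_eq_append_cons_append_cons
  obtain ⟨M', hlen, hM'⟩ := exists_wordProd_eq_conj hconj b⁻¹ M
  refine ⟨A ++ ⟨i, a * b⟩ :: (M' ++ C), by simp [hlen], ?_⟩
  simp only [wordProd_append, wordProd_cons, hM', coe_mul]
  group

lemma exists_nodup_wordProd_eq
    (hconj : ∀ (g : Γ) (i : ι), ∃ j, (X i).map (MulAut.conj g).toMonoidHom ≤ X j)
    (w : List (Σ i, X i)) :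
    ∃ w', (w'.map Sigma.fst).Nodup ∧ wordProd X w' = wordProd X w := by
  by_cases hw : (w.map Sigma.fst).Nodup
  · exact ⟨w, hw, rfl⟩
  obtain ⟨v, -, hv⟩ := exists_shorter_wordProd_eq_of_not_nodup hconj hw
  obtain ⟨w', hw', hw'v⟩ := exists_nodup_wordProd_eq hconj v
  exact ⟨w', hw', hw'v.trans hv⟩
termination_by w.length
decreasing_by assumption

lemma exists_length_le_card_wordProd_eq_of_mem_closure [Fintype ι]
    (hconj : ∀ (g : Γ) (i : ι), ∃ j, (X i).map (MulAut.conj g).toMonoidHom ≤ X j)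
    {n : Γ} (hn : n ∈ closure (⋃ i, (X i : Set Γ))) :
    ∃ w : List (Σ i, X i), w.length ≤ Fintype.card ι ∧ wordProd X w = n := by
  obtain ⟨w, rfl⟩ := exists_wordProd_eq_of_mem_closure X hn
  obtain ⟨w', hnodup, hw'⟩ := exists_nodup_wordProd_eq hconj w
  exact ⟨w', by simpa using hnodup.length_le_card, hw'⟩

end Subgroup

/-- If `X₁, …, X_m` is a conjugation-invariant finite family of finite subgroups of `Γ`,
then every element of the subgroup generated by their union is a product of at most `m`
elements of the union; in particular that subgroup is finite. -/
theorem stmt_5 {Γ : Type*} [Group Γ] {m : ℕ} (X : Fin m → Subgroup Γ)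
    (hfin : ∀ i, (X i : Set Γ).Finite)
    (hconj : ∀ (g : Γ) (i : Fin m), ∃ j,
      Subgroup.map (MulAut.conj g).toMonoidHom (X i) = X j) :
    (∀ n ∈ Subgroup.closure (⋃ i, (X i : Set Γ)),
      ∃ l : List Γ, l.length ≤ m ∧ (∀ x ∈ l, x ∈ ⋃ i, (X i : Set Γ)) ∧ l.prod = n) ∧
    ((Subgroup.closure (⋃ i, (X i : Set Γ)) : Set Γ)).Finite := by
  have hconj' := fun g i => (hconj g i).imp fun _ h => h.le
  have hwords := fun n (hn : n ∈ Subgroup.closure (⋃ i, (X i : Set Γ))) =>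
    Subgroup.exists_length_le_card_wordProd_eq_of_mem_closure hconj' hn
  refine ⟨fun n hn => ?_, ?_⟩
  · obtain ⟨w, hlen, rfl⟩ := hwords n hn
    refine ⟨w.map fun e => (e.2 : Γ), by simpa using hlen, ?_, rfl⟩
    simp only [List.mem_map]
    rintro _ ⟨e, -, rfl⟩
    exact Set.mem_iUnion.2 ⟨e.1, e.2.2⟩
  · have : ∀ i, Finite (X i) := fun i => (hfin i).to_subtype
    refine ((List.finite_length_le _ m).image (Subgroup.wordProd X)).subset fun n hn => ?_
    obtain ⟨w, hlen, rfl⟩ := hwords n hn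
    exact ⟨w, by simpa using hlen, rfl⟩
end

section
/- Let G be a finite abelian group such that for every prime p there is at most one element of G of order p. Then there exists a nonzero finitely supported function a : G → ℤ such that ∑_{h ∈ gX} a(h) = 0 for every g ∈ G and every nontrivial subgroup X of G. -/
open scoped Pointwise

/-- A finite abelian group with at most one element of order `p` for each prime `p`
admits a nonzero integer-valued function whose sums over all cosets of all nontrivial
subgroups vanish. -/
theorem stmt_13 {G : Type*} [CommGroup G] [Finite G]
    (huniq : ∀ p : ℕ, p.Prime → {g : G | orderOf g = p}.Subsingleton) :
    ∃ a : G →₀ ℤ, a ≠ 0 ∧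
      ∀ g : G, ∀ X : Subgroup G, X ≠ ⊥ → ∑ᶠ h ∈ (g • (X : Set G)), a h = 0 := by
  classical
  have : Fintype G := Fintype.ofFinite G
  set P : Finset ℕ := (Fintype.card G).primeFactors with hP
  have hex : ∀ p ∈ P, ∃ g : G, orderOf g = p := by
    intro p hp
    haveI : Fact p.Prime := ⟨Nat.prime_of_mem_primeFactors hp⟩
    exact exists_prime_orderOf_dvd_card p (Nat.dvd_of_mem_primeFactors hp)
  -- choose elements of prime order
  set gp : ℕ → G := fun p => if h : p ∈ P then (hex p h).choose else 1 with hgpdef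
  have hgp : ∀ p ∈ P, orderOf (gp p) = p := by
    intro p hp
    simp only [hgpdef, dif_pos hp]
    exact (hex p hp).choose_spec
  -- key: a product of the chosen elements over a subset of P is 1 only for ∅
  have keyA : ∀ S ∈ P.powerset, (∏ p ∈ S, gp p) = 1 → S = ∅ := by
    intro S hS hprod
    rw [Finset.mem_powerset] at hS
    by_contra hne
    obtain ⟨q, hq⟩ := Finset.nonempty_iff_ne_empty.mpr hne
    set m : ℕ := ∏ p ∈ S.erase q, p with hm
    have h1 : (∏ p ∈ S, gp p) ^ m = (gp q) ^ m := by
      rw [← Finset.mul_prod_erase S gp hq, mul_pow, ← Finset.prod_pow]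
      have : ∀ p ∈ S.erase q, (gp p) ^ m = 1 := by
        intro p hp
        have hpS : p ∈ S := Finset.mem_of_mem_erase hp
        have : orderOf (gp p) ∣ m := by
          rw [hgp p (hS hpS)]
          exact Finset.dvd_prod_of_mem _ hp
        exact orderOf_dvd_iff_pow_eq_one.mp this
      rw [Finset.prod_congr rfl this, Finset.prod_const_one, mul_one]
    have hq1 : (gp q) ^ m = 1 := by rw [← h1, hprod, one_pow]
    have hdvd : orderOf (gp q) ∣ m := orderOf_dvd_iff_pow_eq_one.mpr hq1
    rw [hgp q (hS hq)] at hdvd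
    have hqp : q.Prime := Nat.prime_of_mem_primeFactors (hS hq)
    have : ∃ p ∈ S.erase q, (q : ℕ) ∣ p := (hqp.prime.dvd_finset_prod_iff _).mp hdvd
    obtain ⟨p, hp, hqdvd⟩ := this
    have hpp : p.Prime := Nat.prime_of_mem_primeFactors (hS (Finset.mem_of_mem_erase hp))
    have : q = p := ((Nat.prime_dvd_prime_iff_eq hqp hpp).mp hqdvd)
    exact (Finset.ne_of_mem_erase hp) this.symm
  -- the function a
  set a : G →₀ ℤ :=
      ∑ S ∈ P.powerset, (-1 : ℤ) ^ S.card • Finsupp.single (∏ p ∈ S, gp p) 1 with ha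
  have happly : ∀ h : G,
      a h = ∑ S ∈ P.powerset, (-1 : ℤ) ^ S.card *
        (if (∏ p ∈ S, gp p) = h then 1 else 0) := by
    intro h
    rw [ha, Finsupp.finset_sum_apply]
    refine Finset.sum_congr rfl fun S _ => ?_
    rw [Finsupp.smul_apply, Finsupp.single_apply, smul_eq_mul]
  refine ⟨a, ?_, ?_⟩
  · -- a ≠ 0 since a 1 = 1
    intro h0
    have : a 1 = 1 := by
      rw [happly]
      rw [Finset.sum_eq_single (∅ : Finset ℕ)]
      · simp
      · intro S hS hSne
        have : (∏ p ∈ S, gp p) ≠ 1 := fun hp => hSne (keyA S hS hp)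
        simp [this]
      · intro h; exact absurd (Finset.empty_mem_powerset P) h
    rw [h0] at this
    simp at this
  · intro g X hX
    -- find q ∈ P with gp q ∈ X
    obtain ⟨⟨x, hxX⟩, hx1⟩ := Subgroup.ne_bot_iff_exists_ne_one.mp hX
    have hx1' : x ≠ 1 := by
      simpa [Subgroup.mk_eq_one] using hx1
    have hox : orderOf x ≠ 1 := by simpa using hx1'
    set q : ℕ := (orderOf x).minFac with hqdef
    have hqp : q.Prime := Nat.minFac_prime hox
    have hqP : q ∈ P := by
      rw [hP, Nat.mem_primeFactors]
      exact ⟨hqp, dvd_trans ((orderOf x).minFac_dvd) (orderOf_dvd_card),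
        Fintype.card_ne_zero⟩
    -- element of order q inside X
    set y : G := x ^ (orderOf x / q) with hy
    have hyq : orderOf y = q := by
      have hfin : orderOf x ≠ 0 := (orderOf_pos x).ne'
      exact orderOf_pow_orderOf_div hfin (orderOf x).minFac_dvd
    have hyX : y ∈ X := X.pow_mem hxX _
    have hgpqX : gp q ∈ X := by
      have heq : gp q = y :=
        huniq q hqp (show gp q ∈ {g : G | orderOf g = q} from hgp q hqP)
          (show y ∈ {g : G | orderOf g = q} from hyq)
      rw [heq]; exact hyX
    -- rewrite the finsum as a finset sum
    have hsetfin : (g • (X : Set G)) = ((g • (X : Set G)).toFinset : Set G) := by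
      simp
    rw [hsetfin, finsum_mem_coe_finset]
    set T : Finset G := (g • (X : Set G)).toFinset with hT
    have hTmem : ∀ h : G, h ∈ T ↔ g⁻¹ * h ∈ X := by
      intro h
      rw [hT, Set.mem_toFinset, Set.mem_smul_set_iff_inv_smul_mem]
      rfl
    calc ∑ h ∈ T, a h
        = ∑ S ∈ P.powerset, (-1 : ℤ) ^ S.card *
            (if (∏ p ∈ S, gp p) ∈ T then 1 else 0) := by
          rw [Finset.sum_congr rfl fun h _ => happly h, Finset.sum_comm]
          refine Finset.sum_congr rfl fun S _ => ?_
          rw [← Finset.mul_sum, Finset.sum_ite_eq T (∏ p ∈ S, gp p) (fun _ => (1:ℤ))]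
      _ = 0 := by
          set f : Finset ℕ → ℤ := fun S =>
            (-1 : ℤ) ^ S.card * (if (∏ p ∈ S, gp p) ∈ T then 1 else 0) with hf
          have hqnotin : q ∉ P.erase q := Finset.notMem_erase q P
          have hPins : P = insert q (P.erase q) := (Finset.insert_erase hqP).symm
          rw [hPins, Finset.sum_powerset_insert hqnotin f, ← Finset.sum_add_distrib]
          refine Finset.sum_eq_zero fun S hS => ?_
          rw [Finset.mem_powerset] at hS
          have hqS : q ∉ S := fun h => hqnotin (hS h)
          have hcard : (insert q S).card = S.card + 1 := Finset.card_insert_of_notMem hqS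
          have hprod : (∏ p ∈ insert q S, gp p) = gp q * ∏ p ∈ S, gp p :=
            Finset.prod_insert hqS
          have hiff : ((∏ p ∈ insert q S, gp p) ∈ T) ↔ ((∏ p ∈ S, gp p) ∈ T) := by
            rw [hprod, hTmem, hTmem, mul_left_comm g⁻¹ (gp q) _,
              X.mul_mem_cancel_left hgpqX]
          rw [hf]
          simp only [hcard, hiff, pow_succ]
          ring
end

section
/- Let A and B be C*-algebras, C ⊆ A a C*-subalgebra, and η : A → B a linear map whose restriction to C is a bounded *-homomorphism. Suppose η is compressible to C: for every a ∈ A and ε > 0 there exist φ in the unitization of C and c ∈ C with ‖φ‖ ≤ 1, η(φ) = 1 (extending η unitally to unitizations), η(a) = η(c), and ‖φ* a φ − c‖ ≤ ε. Then for any approximate unit (u_λ) of the ideal ker(η|_C : C → B), and for every a ∈ A, one has ‖η(a)‖ = lim_λ ‖(1 − u_λ) a (1 − u_λ)‖, where the products (1−u_λ)a(1−u_λ) are computed in the unitization of A. -/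
open Filter Topology
open scoped CStarAlgebra

/-!
Write `e = 1 - u i`. For `c ∈ C`, the element `e c e` lies in `C` and has the same image as `c`
under the contractive *-homomorphism `η|_C`, so `‖η c‖ ≤ ‖e c e‖`. Conversely, `‖η c‖` is the
distance from `c` to `ker η|_C` (cut `c` down by a functional calculus of `c⋆c`), and `‖e x‖ → 0`
for `x` in the kernel, so `‖e c e‖ → ‖η c‖`. For general `a`, compress with `ε`: since `φ₀` and
`φ₀⋆` lie in the kernel, `e φ⋆ a φ e - e a e → 0`, while `‖e (φ⋆ a φ - c) e‖ ≤ ε` and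
`η c = η a`.
-/

section QuotientNorm

variable {C B : Type*} [NonUnitalCStarAlgebra C] [NonUnitalCStarAlgebra B]

lemma IsSelfAdjoint.norm_le_of_mem_quasispectrum {a : C} (ha : IsSelfAdjoint a) {s : ℝ}
    (hs : s ∈ quasispectrum ℝ a) : ‖s‖ ≤ ‖a‖ := by
  simpa [cfcₙ_id' ℝ a] using norm_apply_le_norm_cfcₙ (fun s : ℝ => s) a hs

lemma star_sub_mul_cfcₙ_mul_sub_mul_cfcₙ (c : C) {f : ℝ → ℝ} (hf : Continuous f)
    (hf0 : f 0 = 0) :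
    star (c - c * cfcₙ f (star c * c)) * (c - c * cfcₙ f (star c * c)) =
      cfcₙ (fun s => s * (1 - f s) ^ 2) (star c * c) := by
  have hF : star (cfcₙ f (star c * c)) = cfcₙ f (star c * c) :=
    IsSelfAdjoint.star_eq (cfcₙ_predicate f _)
  have hyF : cfcₙ (fun s => s - s * f s) (star c * c) =
      star c * c - star c * c * cfcₙ f (star c * c) := by
    rw [cfcₙ_sub .., cfcₙ_mul .., cfcₙ_id' ℝ (star c * c)]
  calc star (c - c * cfcₙ f (star c * c)) * (c - c * cfcₙ f (star c * c))
      = (star c * c - star c * c * cfcₙ f (star c * c)) -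
          cfcₙ f (star c * c) * (star c * c - star c * c * cfcₙ f (star c * c)) := by
        rw [star_sub, star_mul, hF]; noncomm_ring
    _ = cfcₙ (fun s => (s - s * f s) - f s * (s - s * f s)) (star c * c) := by
        rw [cfcₙ_sub .., cfcₙ_mul .., hyF]
    _ = _ := cfcₙ_congr fun s _ => by ring

lemma NonUnitalStarAlgHom.exists_map_eq_zero_norm_sub_le (π : C →⋆ₙₐ[ℂ] B) (c : C) {r : ℝ}
    (hr : ‖π c‖ < r) : ∃ x, π x = 0 ∧ ‖c - x‖ ≤ r := by
  have hr0 : 0 < r := (norm_nonneg _).trans_lt hr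
  have hk : 0 < r ^ 2 := by positivity
  -- `f` vanishes on `[-r², r²]`, and `s (1 - f s) ^ 2 = s (r² / max |s| r²) ^ 2` is at most `r²`
  set f : ℝ → ℝ := fun s => 1 - r ^ 2 / max |s| (r ^ 2)
  have hf : Continuous f := continuous_const.sub <|
    continuous_const.div (by fun_prop) fun s => (hk.trans_le (le_max_right _ _)).ne'
  have hf_zero : ∀ s, |s| ≤ r ^ 2 → f s = 0 := fun s hs => by
    simp [f, max_eq_right hs, hk.ne']
  have hf0 : f 0 = 0 := hf_zero 0 (by simpa using hk.le)
  have hy : IsSelfAdjoint (star c * c) := .star_mul_self c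
  refine ⟨c * cfcₙ f (star c * c), ?_, ?_⟩
  · have hπy : ‖π (star c * c)‖ < r ^ 2 := by
      rw [map_mul, map_star, CStarRing.norm_star_mul_self, ← sq]
      exact pow_lt_pow_left₀ hr (norm_nonneg _) two_ne_zero
    have : cfcₙ f (π (star c * c)) = 0 := by
      rw [cfcₙ_congr (g := 0), cfcₙ_zero]
      intro s hs
      exact hf_zero s ((IsSelfAdjoint.norm_le_of_mem_quasispectrum
        (hy.map π) hs).trans hπy.le)
    rw [map_mul, π.map_cfcₙ f (star c * c) hf.continuousOn hf0 (by fun_prop) hy (hy.map π),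
      this, mul_zero]
  · have hsq : ‖c - c * cfcₙ f (star c * c)‖ ^ 2 ≤ r ^ 2 := by
      rw [sq, ← CStarRing.norm_star_mul_self, star_sub_mul_cfcₙ_mul_sub_mul_cfcₙ c hf hf0]
      refine norm_cfcₙ_le fun s _ => ?_
      have hm : 0 < max |s| (r ^ 2) := hk.trans_le (le_max_right _ _)
      have h1 : 1 - f s = r ^ 2 / max |s| (r ^ 2) := by simp [f]
      rw [h1, norm_mul, norm_pow, Real.norm_eq_abs, Real.norm_eq_abs, abs_div, abs_of_pos hk,
        abs_of_pos hm]
      rcases le_total |s| (r ^ 2) with hs | hs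
      · rw [max_eq_right hs, div_self hk.ne', one_pow, mul_one]; exact hs
      · have hs0 : 0 < |s| := hk.trans_le hs
        rw [max_eq_left hs, div_pow, mul_div_assoc', div_le_iff₀ (by positivity)]
        nlinarith [mul_le_mul_of_nonneg_left hs (by positivity : 0 ≤ r ^ 2 * |s|)]
    exact (pow_le_pow_iff_left₀ (norm_nonneg _) hr0.le two_ne_zero).mp hsq

end QuotientNorm

lemma norm_one_sub_star_mul_self_le_one {A : Type*} [CStarAlgebra A] (v : A)
    (hv : ‖star v * v‖ ≤ 1) : ‖1 - star v * v‖ ≤ 1 := by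
  let _ := CStarAlgebra.spectralOrder A
  let _ := CStarAlgebra.spectralOrderedRing A
  have h0 : 0 ≤ star v * v := star_mul_self_nonneg v
  have h1 : star v * v ≤ 1 := (CStarAlgebra.norm_le_one_iff_of_nonneg _ h0).mp hv
  exact (CStarAlgebra.norm_le_one_iff_of_nonneg _ (sub_nonneg.mpr h1)).mpr (sub_le_self 1 h0)

section NormedRing

variable {R : Type*} [NormedRing R]

lemma norm_mul_mul_le_of_norm_le_one {e : R} (he : ‖e‖ ≤ 1) (x : R) : ‖e * x * e‖ ≤ ‖x‖ :=
  calc ‖e * x * e‖ ≤ ‖e‖ * ‖x‖ * ‖e‖ := norm_mul₃_le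
    _ ≤ 1 * ‖x‖ * 1 := by gcongr
    _ = ‖x‖ := by ring

lemma tendsto_norm_mul_one_add_mul_mul_one_add_mul_sub {ι : Type*} {l : Filter ι} {e : ι → R}
    (he : ∀ i, ‖e i‖ ≤ 1) (a p q : R)
    (hp : Tendsto (fun i => ‖e i * p‖) l (𝓝 0)) (hq : Tendsto (fun i => ‖q * e i‖) l (𝓝 0)) :
    Tendsto (fun i => ‖e i * ((1 + p) * a * (1 + q)) * e i - e i * a * e i‖) l (𝓝 0) := by
  have hbound : ∀ i, ‖e i * ((1 + p) * a * (1 + q)) * e i - e i * a * e i‖ ≤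
      ‖e i * p‖ * ‖a‖ + ‖a‖ * ‖q * e i‖ + ‖e i * p‖ * ‖a‖ * ‖q * e i‖ := fun i => by
    have hexpand : e i * ((1 + p) * a * (1 + q)) * e i - e i * a * e i =
        e i * p * a * e i + e i * a * (q * e i) + e i * p * a * (q * e i) := by noncomm_ring
    rw [hexpand]
    refine (norm_add₃_le).trans (add_le_add_three ?_ ?_ ?_)
    · calc ‖e i * p * a * e i‖ ≤ ‖e i * p‖ * ‖a‖ * ‖e i‖ := norm_mul₃_le
        _ ≤ ‖e i * p‖ * ‖a‖ * 1 := by gcongr; exact he i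
        _ = _ := mul_one _
    · calc ‖e i * a * (q * e i)‖ ≤ ‖e i‖ * ‖a‖ * ‖q * e i‖ := norm_mul₃_le
        _ ≤ 1 * ‖a‖ * ‖q * e i‖ := by gcongr; exact he i
        _ = _ := by rw [one_mul]
    · exact norm_mul₃_le
  refine squeeze_zero (fun _ => norm_nonneg _) hbound ?_
  simpa using ((hp.mul_const ‖a‖).add (hq.const_mul ‖a‖)).add ((hp.mul_const ‖a‖).mul hq)

lemma tendsto_norm_mul_star_one_add_mul_mul_one_add_mul_sub [StarRing R] [NormedStarGroup R]
    {ι : Type*} {l : Filter ι} {e : ι → R} (he : ∀ i, ‖e i‖ ≤ 1)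
    (he_sa : ∀ i, IsSelfAdjoint (e i)) (a q : R)
    (hq : Tendsto (fun i => ‖e i * star q‖) l (𝓝 0)) :
    Tendsto (fun i => ‖e i * (star (1 + q) * a * (1 + q)) * e i - e i * a * e i‖) l (𝓝 0) := by
  have hq' : ∀ i, ‖q * e i‖ = ‖e i * star q‖ := fun i => by
    rw [← norm_star, star_mul, (he_sa i).star_eq]
  rw [star_add, star_one]
  exact tendsto_norm_mul_one_add_mul_mul_one_add_mul_sub he a _ q hq (by simpa only [hq'] using hq)

lemma dist_norm_mul_mul_le {e : R} (he : ‖e‖ ≤ 1) (a b m : R) :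
    dist ‖e * a * e‖ ‖e * b * e‖ ≤ ‖e * m * e - e * a * e‖ + ‖m - b‖ :=
  calc dist ‖e * a * e‖ ‖e * b * e‖ ≤ ‖e * a * e - e * b * e‖ := dist_norm_norm_le _ _
    _ ≤ ‖e * a * e - e * m * e‖ + ‖e * m * e - e * b * e‖ :=
        norm_sub_le_norm_sub_add_norm_sub _ _ _
    _ = ‖e * m * e - e * a * e‖ + ‖e * (m - b) * e‖ := by
        rw [norm_sub_rev (e * a * e), mul_sub, sub_mul]
    _ ≤ ‖e * m * e - e * a * e‖ + ‖m - b‖ := by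
        gcongr; exact norm_mul_mul_le_of_norm_le_one he _

end NormedRing

lemma tendsto_of_forall_eventually_dist_le {X ι : Type*} [PseudoMetricSpace X] {l : Filter ι}
    {f : ι → X} {x : X}
    (h : ∀ ε > 0, ∃ g : ι → X, Tendsto g l (𝓝 x) ∧ ∀ᶠ i in l, dist (f i) (g i) ≤ ε) :
    Tendsto f l (𝓝 x) := by
  refine Metric.tendsto_nhds.2 fun ε hε => ?_
  obtain ⟨g, hg, hfg⟩ := h (ε / 2) (half_pos hε)
  filter_upwards [Metric.tendsto_nhds.1 hg (ε / 2) (half_pos hε), hfg] with i hgi hfgi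
  linarith [dist_triangle (f i) (g i) x]

section Compression

variable {A B : Type*} [NonUnitalCStarAlgebra A] [NonUnitalCStarAlgebra B]
  {C : NonUnitalStarSubalgebra ℂ A} {η : A →ₗ[ℂ] B}

variable (C η) in
def LinearMap.restrictStarAlgHom (hmul : ∀ x ∈ C, ∀ y ∈ C, η (x * y) = η x * η y)
    (hstar : ∀ x ∈ C, η (star x) = star (η x)) : C →⋆ₙₐ[ℂ] B where
  toFun x := η x
  map_add' x y := η.map_add x y
  map_smul' r x := η.map_smul r x
  map_zero' := η.map_zero
  map_mul' x y := hmul x x.2 y y.2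
  map_star' x := hstar x x.2

lemma Unitization.one_sub_inr_mul_inr (u x : A) :
    (1 - (u : Unitization ℂ A)) * x = ((x - u * x : A) : Unitization ℂ A) := by
  simp [sub_mul]

lemma Unitization.one_sub_inr_mul_inr_mul_one_sub_inr (u x : A) :
    (1 - (u : Unitization ℂ A)) * x * (1 - u) =
      ((x - u * x - x * u + u * x * u : A) : Unitization ℂ A) := by
  simp only [Unitization.inr_add, Unitization.inr_sub, Unitization.inr_mul]
  noncomm_ring

lemma Unitization.norm_one_sub_inr_star_mul_self_le_one (v : A) (hv : ‖star v * v‖ ≤ 1) :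
    ‖1 - ((star v * v : A) : Unitization ℂ A)‖ ≤ 1 := by
  rw [Unitization.inr_mul, Unitization.inr_star]
  refine norm_one_sub_star_mul_self_le_one _ ?_
  rwa [← Unitization.inr_star, ← Unitization.inr_mul, Unitization.norm_inr]

lemma norm_apply_le_norm_one_sub_mul_mul_one_sub [IsClosed (C : Set A)]
    (hmul : ∀ x ∈ C, ∀ y ∈ C, η (x * y) = η x * η y)
    (hstar : ∀ x ∈ C, η (star x) = star (η x)) {u c : A} (hu : u ∈ C) (huker : η u = 0)
    (hc : c ∈ C) : ‖η c‖ ≤ ‖(1 - (u : Unitization ℂ A)) * c * (1 - u)‖ := by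
  have hmem : c - u * c - c * u + u * c * u ∈ C :=
    add_mem (sub_mem (sub_mem hc (mul_mem hu hc)) (mul_mem hc hu)) (mul_mem (mul_mem hu hc) hu)
  have hη : η (c - u * c - c * u + u * c * u) = η c := by
    simp [hmul _ hu _ hc, hmul _ hc _ hu, hmul _ (mul_mem hu hc) _ hu, huker]
  rw [Unitization.one_sub_inr_mul_inr_mul_one_sub_inr, Unitization.norm_inr, ← hη]
  exact NonUnitalStarAlgHom.norm_apply_le (η.restrictStarAlgHom C hmul hstar) ⟨_, hmem⟩

lemma tendsto_norm_one_sub_mul_mul_one_sub_of_mem [IsClosed (C : Set A)]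
    (hmul : ∀ x ∈ C, ∀ y ∈ C, η (x * y) = η x * η y)
    (hstar : ∀ x ∈ C, η (star x) = star (η x))
    {ι : Type*} {l : Filter ι} {u : ι → A} (humem : ∀ i, u i ∈ C) (huker : ∀ i, η (u i) = 0)
    (he : ∀ i, ‖(1 : Unitization ℂ A) - u i‖ ≤ 1)
    (huapprox : ∀ x ∈ C, η x = 0 → Tendsto (fun i => ‖x - u i * x‖) l (𝓝 0))
    {c : A} (hc : c ∈ C) :
    Tendsto (fun i => ‖((1 : Unitization ℂ A) - u i) * c * ((1 : Unitization ℂ A) - u i)‖) l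
      (𝓝 ‖η c‖) := by
  refine tendsto_order.2 ⟨fun r hr => .of_forall fun i => hr.trans_le
    (norm_apply_le_norm_one_sub_mul_mul_one_sub hmul hstar (humem i) (huker i) hc), fun r hr => ?_⟩
  obtain ⟨x, hx, hcx⟩ := NonUnitalStarAlgHom.exists_map_eq_zero_norm_sub_le
    (η.restrictStarAlgHom C hmul hstar)
    ⟨c, hc⟩ (r := (‖η c‖ + r) / 2) (by change ‖η c‖ < _; linarith)
  filter_upwards [(huapprox x x.2 hx).eventually_lt_const (by linarith : 0 < (r - ‖η c‖) / 2)]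
    with i hi
  set e : Unitization ℂ A := 1 - u i
  calc ‖e * c * e‖ = ‖e * ((c - x : A) : Unitization ℂ A) * e + e * x * e‖ := by
        rw [Unitization.inr_sub]; noncomm_ring
    _ ≤ ‖((c - x : A) : Unitization ℂ A)‖ + ‖e * x‖ := by
        refine (norm_add_le _ _).trans (add_le_add (norm_mul_mul_le_of_norm_le_one (he i) _) ?_)
        exact (norm_mul_le _ _).trans (mul_le_of_le_one_right (norm_nonneg _) (he i))
    _ < r := by
        rw [Unitization.norm_inr, Unitization.one_sub_inr_mul_inr, Unitization.norm_inr]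
        exact (add_lt_add_of_le_of_lt hcx hi).trans_eq (by ring)

end Compression

theorem stmt_15_general {A B : Type*} [NonUnitalCStarAlgebra A] [NonUnitalCStarAlgebra B]
    (C : NonUnitalStarSubalgebra ℂ A) (hC : IsClosed (C : Set A))
    (η : A →ₗ[ℂ] B)
    (hmul : ∀ x ∈ C, ∀ y ∈ C, η (x * y) = η x * η y)
    (hstar : ∀ x ∈ C, η (star x) = star (η x))
    (hcomp : ∀ a : A, ∀ ε > (0 : ℝ), ∃ φ₀ ∈ C, ∃ c ∈ C,
      η φ₀ = 0 ∧ ‖(1 : Unitization ℂ A) + φ₀‖ ≤ 1 ∧ η a = η c ∧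
      ‖star ((1 : Unitization ℂ A) + φ₀) * (a : Unitization ℂ A) *
        ((1 : Unitization ℂ A) + φ₀) - (c : Unitization ℂ A)‖ ≤ ε)
    {ι : Type*} [SemilatticeSup ι] (u : ι → A)
    (humem : ∀ i, u i ∈ C) (huker : ∀ i, η (u i) = 0)
    (hupos : ∀ i, ∃ v ∈ C, u i = star v * v) (hunorm : ∀ i, ‖u i‖ ≤ 1)
    (huapprox : ∀ x ∈ C, η x = 0 →
      Tendsto (fun i => ‖x - u i * x‖) atTop (𝓝 0)) :
    ∀ a : A, Tendsto
      (fun i => ‖((1 : Unitization ℂ A) - u i) * (a : Unitization ℂ A) *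
        ((1 : Unitization ℂ A) - u i)‖) atTop (𝓝 ‖η a‖) := by
  have he : ∀ i, ‖(1 : Unitization ℂ A) - u i‖ ≤ 1 := fun i => by
    obtain ⟨v, -, hv⟩ := hupos i
    exact hv ▸ Unitization.norm_one_sub_inr_star_mul_self_le_one v (hv ▸ hunorm i)
  have he_sa : ∀ i, IsSelfAdjoint ((1 : Unitization ℂ A) - u i) := fun i => by
    obtain ⟨v, -, hv⟩ := hupos i
    rw [hv, Unitization.inr_mul, Unitization.inr_star]
    exact .sub (.one _) (.star_mul_self _)
  intro a
  refine tendsto_of_forall_eventually_dist_le fun ε hε => ?_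
  obtain ⟨φ₀, hφ₀, c, hc, hηφ₀, -, hηac, hφac⟩ := hcomp a (ε / 2) (half_pos hε)
  refine ⟨_, hηac ▸ tendsto_norm_one_sub_mul_mul_one_sub_of_mem hmul hstar humem huker he
    huapprox hc, ?_⟩
  have hφ₀_ker : Tendsto (fun i => ‖(1 - (u i : Unitization ℂ A)) * star (φ₀ : Unitization ℂ A)‖)
      atTop (𝓝 0) := by
    simpa only [← Unitization.inr_star, Unitization.one_sub_inr_mul_inr, Unitization.norm_inr]
      using huapprox (star φ₀) (star_mem hφ₀) (by rw [hstar φ₀ hφ₀, hηφ₀, star_zero])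
  filter_upwards [(tendsto_norm_mul_star_one_add_mul_mul_one_add_mul_sub he he_sa _ _
    hφ₀_ker).eventually_le_const (half_pos hε)] with i hi
  exact (dist_norm_mul_mul_le (he i) _ _ _).trans ((add_le_add hi hφac).trans_eq (add_halves ε))

/-- **Norm equation for compressible maps.**  If `η : A → B` is a linear map between
C*-algebras which is compressible to a closed *-subalgebra `C` on which it restricts to a
bounded *-homomorphism, then for every approximate unit `(u i)` of `ker (η|_C)` and every
`a ∈ A` one has `‖η a‖ = lim_i ‖(1 - u i) a (1 - u i)‖`, the products being computed in
the unitization of `A`.  Here an element `φ` of the unitization of `C` with `η φ = 1`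
(for the unital extension of `η`) is written as `φ = 1 + φ₀` with `φ₀ ∈ C`, `η φ₀ = 0`,
and positivity of `u i` is expressed as `u i = star v * v` with `v ∈ C`. -/
theorem stmt_15 {A B : Type*} [NonUnitalCStarAlgebra A] [NonUnitalCStarAlgebra B]
    (C : NonUnitalStarSubalgebra ℂ A) (hC : IsClosed (C : Set A))
    (η : A →ₗ[ℂ] B)
    (hmul : ∀ x ∈ C, ∀ y ∈ C, η (x * y) = η x * η y)
    (hstar : ∀ x ∈ C, η (star x) = star (η x))
    (hbdd : ∃ M : ℝ, ∀ c ∈ C, ‖η c‖ ≤ M * ‖c‖)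
    (hcomp : ∀ a : A, ∀ ε > (0 : ℝ), ∃ φ₀ ∈ C, ∃ c ∈ C,
      η φ₀ = 0 ∧ ‖(1 : Unitization ℂ A) + φ₀‖ ≤ 1 ∧ η a = η c ∧
      ‖star ((1 : Unitization ℂ A) + φ₀) * (a : Unitization ℂ A) *
        ((1 : Unitization ℂ A) + φ₀) - (c : Unitization ℂ A)‖ ≤ ε)
    {ι : Type*} [Nonempty ι] [SemilatticeSup ι] (u : ι → A)
    (humem : ∀ i, u i ∈ C) (huker : ∀ i, η (u i) = 0)
    (hupos : ∀ i, ∃ v ∈ C, u i = star v * v) (hunorm : ∀ i, ‖u i‖ ≤ 1)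
    (huapprox : ∀ x ∈ C, η x = 0 →
      Tendsto (fun i => ‖x - u i * x‖) atTop (𝓝 0)) :
    ∀ a : A, Tendsto
      (fun i => ‖((1 : Unitization ℂ A) - u i) * (a : Unitization ℂ A) *
        ((1 : Unitization ℂ A) - u i)‖) atTop (𝓝 ‖η a‖) :=
  stmt_15_general C hC η hmul hstar hcomp u humem huker hupos hunorm huapprox
end

section
/- Let A and B be C*-algebras and η : A → B a linear map that is compressible to a C*-subalgebra C ⊆ A on which η restricts to a bounded *-homomorphism. Then η is positive: for every a ∈ A with a ≥ 0, η(a) ≥ 0 in B; moreover η is a contraction: ‖η(a)‖ ≤ ‖a‖ for all a ∈ A. -/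
/-!
Contractivity: `η a = η c` with `c` close to the compression `φ⋆ a φ`, whose norm is at most
`‖a‖`, and `η` is contractive on `C` because a *-homomorphism out of a C⋆-algebra is.

Positivity: for `a = v⋆ v` the compression is positive and `ε`-close to `c ∈ C`. The real part
`x` of `c` is then `ε`-close to a positive element, so its negative part has norm at most `ε`, and
`c` is `2ε`-close to `x⁺ = w⋆ w`, where `w = √x⁺` stays in the closed subalgebra `C`. Hence
`η a = η c` is `2ε`-close to `(η w)⋆ (η w)`, and `η a ≥ 0` because the positive cone is closed.
-/

open scoped ComplexStarModule CStarAlgebra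

section

variable {A : Type*} [NonUnitalCStarAlgebra A]

lemma NonUnitalStarSubalgebra.realPart_mem {C : NonUnitalStarSubalgebra ℂ A} {c : A} (hc : c ∈ C) :
    (ℜ c : A) ∈ C := by
  rw [realPart_apply_coe, ← algebraMap_smul ℂ]
  exact SMulMemClass.smul_mem _ (add_mem hc (star_mem hc))

lemma IsSelfAdjoint.norm_sub_realPart_le {c p : A} (hp : IsSelfAdjoint p) :
    ‖c - ℜ c‖ ≤ ‖c - p‖ :=
  calc ‖c - ℜ c‖ = ‖ℑ (c - p)‖ := by
        rw [map_sub, hp.imaginaryPart, sub_zero, ← AddSubgroup.norm_coe,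
          ← eq_sub_of_add_eq' (realPart_add_I_smul_imaginaryPart c), norm_smul,
          Complex.norm_I, one_mul]
    _ ≤ ‖c - p‖ := imaginaryPart.norm_le _

lemma IsSelfAdjoint.norm_realPart_sub_le {c p : A} (hp : IsSelfAdjoint p) :
    ‖(ℜ c : A) - p‖ ≤ ‖c - p‖ :=
  calc ‖(ℜ c : A) - p‖ = ‖ℜ (c - p)‖ := by
        rw [map_sub, ← AddSubgroup.norm_coe, AddSubgroupClass.coe_sub, hp.coe_realPart]
    _ ≤ ‖c - p‖ := realPart.norm_le _

section Order

variable [PartialOrder A] [StarOrderedRing A]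

open CFC

lemma IsSelfAdjoint.norm_negPart_le_norm_sub {x p : A} (hx : IsSelfAdjoint x) (hp : 0 ≤ p) :
    ‖x⁻‖ ≤ ‖x - p‖ := by
  have hle : algebraMap ℝ A⁺¹ (-‖x - p‖) ≤ (x : A⁺¹) := by
    have hxp : IsSelfAdjoint ((x - p : A) : A⁺¹) := (hx.sub (.of_nonneg hp)).inr ℂ
    calc algebraMap ℝ A⁺¹ (-‖x - p‖) = -algebraMap ℝ A⁺¹ ‖((x - p : A) : A⁺¹)‖ := by
          rw [map_neg, Unitization.norm_inr]
      _ ≤ ((x - p : A) : A⁺¹) := hxp.neg_algebraMap_norm_le_self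
      _ ≤ ((x - p : A) : A⁺¹) + (p : A⁺¹) :=
          le_add_of_nonneg_right (Unitization.inr_nonneg_iff.mpr hp)
      _ = (x : A⁺¹) := by rw [← Unitization.inr_add, sub_add_cancel]
  have hspec := (algebraMap_le_iff_le_spectrum (hx.inr ℂ)).mp hle
  refine norm_cfcₙ_le fun t ht => ?_
  rw [Unitization.quasispectrum_eq_spectrum_inr' ℝ ℂ x] at ht
  have := hspec t ht
  rw [Real.norm_eq_abs, abs_of_nonneg (negPart_nonneg t)]
  exact max_le (by linarith) (norm_nonneg _)

lemma NonUnitalStarSubalgebra.exists_norm_sub_star_mul_self_le {C : NonUnitalStarSubalgebra ℂ A}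
    (hC : IsClosed (C : Set A)) {c p : A} (hc : c ∈ C) (hp : 0 ≤ p) :
    ∃ w ∈ C, ‖c - star w * w‖ ≤ 2 * ‖c - p‖ := by
  have := hC
  set x : A := (ℜ c : A)
  have hx : IsSelfAdjoint x := (ℜ c).2
  have hxC : x⁺ ∈ C := cfcₙ_mem _ (realPart_mem hc)
  refine ⟨sqrt x⁺, ?_, ?_⟩
  · rw [sqrt_eq_real_sqrt _ (posPart_nonneg x)]
    exact cfcₙ_mem _ hxC
  rw [(sqrt_nonneg _).isSelfAdjoint.star_eq, sqrt_mul_sqrt_self _ (posPart_nonneg x)]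
  calc ‖c - x⁺‖ = ‖c - x - x⁻‖ := by
        rw [sub_sub, ← sub_eq_iff_eq_add.mp (posPart_sub_negPart x hx)]
    _ ≤ ‖c - x‖ + ‖x⁻‖ := norm_sub_le _ _
    _ ≤ ‖c - p‖ + ‖c - p‖ := by
        gcongr
        · exact (IsSelfAdjoint.of_nonneg hp).norm_sub_realPart_le
        · exact (hx.norm_negPart_le_norm_sub hp).trans
            (IsSelfAdjoint.of_nonneg hp).norm_realPart_sub_le
    _ = 2 * ‖c - p‖ := by ring

end Order

lemma norm_star_mul_mul_le_of_norm_le_one {E : Type*} [NonUnitalNormedRing E] [StarRing E]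
    [NormedStarGroup E] {φ : E} (hφ : ‖φ‖ ≤ 1) (a : E) : ‖star φ * a * φ‖ ≤ ‖a‖ :=
  calc ‖star φ * a * φ‖ ≤ ‖φ‖ * ‖a‖ * ‖φ‖ := by
        grw [norm_mul_le, norm_mul_le, norm_star]
    _ ≤ 1 * ‖a‖ * 1 := by gcongr
    _ = ‖a‖ := by ring

variable {B : Type*} [NonUnitalCStarAlgebra B]

/-- The element `φ` of the unitization of `C` is written `1 + φ₀` with `φ₀ ∈ C`, so that
`η φ = 1` for the unital extension of `η` becomes `η φ₀ = 0`. -/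
def LinearMap.IsCompressibleTo (η : A →ₗ[ℂ] B) (C : NonUnitalStarSubalgebra ℂ A) : Prop :=
  ∀ a : A, ∀ ε > (0 : ℝ), ∃ φ₀ ∈ C, ∃ c ∈ C,
    η φ₀ = 0 ∧ ‖(1 : A⁺¹) + φ₀‖ ≤ 1 ∧ η a = η c ∧
    ‖star ((1 : A⁺¹) + φ₀) * (a : A⁺¹) * ((1 : A⁺¹) + φ₀) - (c : A⁺¹)‖ ≤ ε

lemma LinearMap.norm_apply_le_of_mem {C : NonUnitalStarSubalgebra ℂ A}
    (hC : IsClosed (C : Set A)) (η : A →ₗ[ℂ] B)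
    (hmul : ∀ x ∈ C, ∀ y ∈ C, η (x * y) = η x * η y)
    (hstar : ∀ x ∈ C, η (star x) = star (η x)) {c : A} (hc : c ∈ C) : ‖η c‖ ≤ ‖c‖ := by
  have := hC
  let ψ : C →⋆ₙₐ[ℂ] B :=
    { toFun := fun x => η x
      map_smul' := fun r x => η.map_smul r x
      map_zero' := η.map_zero
      map_add' := fun x y => η.map_add x y
      map_mul' := fun x y => hmul x x.2 y y.2
      map_star' := fun x => hstar x x.2 }
  exact NonUnitalStarAlgHom.norm_apply_le ψ ⟨c, hc⟩

namespace LinearMap.IsCompressibleTo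

variable {η : A →ₗ[ℂ] B} {C : NonUnitalStarSubalgebra ℂ A}

lemma norm_apply_le (hC : IsClosed (C : Set A))
    (hmul : ∀ x ∈ C, ∀ y ∈ C, η (x * y) = η x * η y)
    (hstar : ∀ x ∈ C, η (star x) = star (η x)) (hη : η.IsCompressibleTo C) (a : A) :
    ‖η a‖ ≤ ‖a‖ := by
  refine le_of_forall_pos_le_add fun ε hε => ?_
  obtain ⟨φ₀, -, c, hc, -, hφ, hηc, hclose⟩ := hη a ε hε
  set φ : A⁺¹ := 1 + φ₀
  calc ‖η a‖ = ‖η c‖ := by rw [hηc]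
    _ ≤ ‖c‖ := η.norm_apply_le_of_mem hC hmul hstar hc
    _ = ‖(c : A⁺¹)‖ := (Unitization.norm_inr c).symm
    _ ≤ ‖star φ * a * φ‖ + ‖star φ * a * φ - c‖ := norm_le_insert _ _
    _ ≤ ‖a‖ + ε := by
        grw [norm_star_mul_mul_le_of_norm_le_one hφ, Unitization.norm_inr, hclose]

lemma exists_apply_star_mul_self_eq (hC : IsClosed (C : Set A))
    (hmul : ∀ x ∈ C, ∀ y ∈ C, η (x * y) = η x * η y)
    (hstar : ∀ x ∈ C, η (star x) = star (η x)) (hη : η.IsCompressibleTo C) (v : A) :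
    ∃ w : B, η (star v * v) = star w * w := by
  let _ := CStarAlgebra.spectralOrder A
  have := CStarAlgebra.spectralOrderedRing A
  let _ := CStarAlgebra.spectralOrder B
  have := CStarAlgebra.spectralOrderedRing B
  rw [← CStarAlgebra.nonneg_iff_eq_star_mul_self]
  refine (CStarAlgebra.isClosed_nonneg (A := B)).closure_subset
    (Metric.mem_closure_iff.mpr fun ε hε => ?_)
  obtain ⟨φ₀, -, c, hc, -, -, hηc, hclose⟩ := hη (star v * v) (ε / 3) (by positivity)
  set u := v + v * φ₀
  have hcompress : star ((1 : A⁺¹) + φ₀) * ((star v * v : A) : A⁺¹) * ((1 : A⁺¹) + φ₀) =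
      ((star u * u : A) : A⁺¹) := by
    simp only [u, Unitization.inr_mul, Unitization.inr_star, Unitization.inr_add, star_add,
      star_mul, star_one]
    noncomm_ring
  have hu : ‖c - star u * u‖ ≤ ε / 3 := by
    rwa [norm_sub_rev, ← Unitization.norm_inr (𝕜 := ℂ), Unitization.inr_sub, ← hcompress]
  obtain ⟨w, hw, hcw⟩ := C.exists_norm_sub_star_mul_self_le hC hc (star_mul_self_nonneg u)
  refine ⟨star (η w) * η w, star_mul_self_nonneg (η w), ?_⟩
  rw [dist_eq_norm, hηc, ← hstar w hw, ← hmul _ (star_mem hw) _ hw, ← map_sub]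
  calc ‖η (c - star w * w)‖ ≤ ‖c - star w * w‖ :=
        η.norm_apply_le_of_mem hC hmul hstar (sub_mem hc (mul_mem (star_mem hw) hw))
    _ ≤ 2 * (ε / 3) := by grw [hcw, hu]
    _ < ε := by linarith

end LinearMap.IsCompressibleTo

end

theorem stmt_16_general {A B : Type*} [NonUnitalCStarAlgebra A] [NonUnitalCStarAlgebra B]
    (C : NonUnitalStarSubalgebra ℂ A) (hC : IsClosed (C : Set A))
    (η : A →ₗ[ℂ] B)
    (hmul : ∀ x ∈ C, ∀ y ∈ C, η (x * y) = η x * η y)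
    (hstar : ∀ x ∈ C, η (star x) = star (η x))
    (hcomp : ∀ a : A, ∀ ε > (0 : ℝ), ∃ φ₀ ∈ C, ∃ c ∈ C,
      η φ₀ = 0 ∧ ‖(1 : Unitization ℂ A) + φ₀‖ ≤ 1 ∧ η a = η c ∧
      ‖star ((1 : Unitization ℂ A) + φ₀) * (a : Unitization ℂ A) *
        ((1 : Unitization ℂ A) + φ₀) - (c : Unitization ℂ A)‖ ≤ ε) :
    (∀ a : A, (∃ v : A, a = star v * v) → ∃ w : B, η a = star w * w) ∧
    (∀ a : A, ‖η a‖ ≤ ‖a‖) := by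
  have hη : η.IsCompressibleTo C := hcomp
  refine ⟨?_, hη.norm_apply_le hC hmul hstar⟩
  rintro a ⟨v, rfl⟩
  exact hη.exists_apply_star_mul_self_eq hC hmul hstar v

/-- A linear map between C*-algebras which is compressible to a closed *-subalgebra `C`
on which it restricts to a bounded *-homomorphism is positive and contractive.
Positivity of elements is expressed in the C*-algebraic way: `0 ≤ a` iff
`a = star v * v` for some `v`. -/
theorem stmt_16 {A B : Type*} [NonUnitalCStarAlgebra A] [NonUnitalCStarAlgebra B]
    (C : NonUnitalStarSubalgebra ℂ A) (hC : IsClosed (C : Set A))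
    (η : A →ₗ[ℂ] B)
    (hmul : ∀ x ∈ C, ∀ y ∈ C, η (x * y) = η x * η y)
    (hstar : ∀ x ∈ C, η (star x) = star (η x))
    (hbdd : ∃ M : ℝ, ∀ c ∈ C, ‖η c‖ ≤ M * ‖c‖)
    (hcomp : ∀ a : A, ∀ ε > (0 : ℝ), ∃ φ₀ ∈ C, ∃ c ∈ C,
      η φ₀ = 0 ∧ ‖(1 : Unitization ℂ A) + φ₀‖ ≤ 1 ∧ η a = η c ∧
      ‖star ((1 : Unitization ℂ A) + φ₀) * (a : Unitization ℂ A) *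
        ((1 : Unitization ℂ A) + φ₀) - (c : Unitization ℂ A)‖ ≤ ε) :
    (∀ a : A, (∃ v : A, a = star v * v) → ∃ w : B, η a = star w * w) ∧
    (∀ a : A, ‖η a‖ ≤ ‖a‖) :=
  stmt_16_general C hC η hmul hstar hcomp
end

section
/- Let Γ be a group and 𝒳 a set of subgroups of Γ, closed as a subset of {0,1}^Γ with the product topology, such that every X ∈ 𝒳 is finite and the trivial subgroup is not in 𝒳. Then there exists a finite subset ℱ ⊆ 𝒳 such that for every X ∈ 𝒳 there is Y ∈ ℱ with Y ⊆ X. Moreover, if 𝒳 is invariant under conjugation then ℱ can be chosen invariant under conjugation. -/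
/-!
Take `ℱ` to be the minimal members of `𝒳`; each member of `𝒳` contains one, since a finite set
has finitely many subsets. For minimal `Y`, the functions equal to `true` on the finite set `Y`
form an open subset of `{0,1}^Γ`, and these open sets cover the closed, hence compact, set of
indicators of members of `𝒳`. The indicator of `Y` lies in the open set of `Z` only when
`Z ≤ Y`, i.e. `Z = Y`, so a finite subcover uses every minimal member. Conjugations act on `𝒳`
by order isomorphisms, so they permute its minimal members.
-/

open Set

theorem Minimal.orderIso_apply {α β : Type*} [Preorder α] [Preorder β] {s : Set α} {t : Set β}
    {x : α} (e : α ≃o β) (hx : Minimal (· ∈ s) x) (hst : MapsTo e s t) (hts : MapsTo e.symm t s) :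
    Minimal (· ∈ t) (e x) :=
  ⟨hst hx.prop, fun _ hy hyx => e.le_symm_apply.1 (hx.2 (hts hy) (e.symm_apply_le.2 hyx))⟩

namespace SetLike

variable {A ι : Type*} [SetLike A ι] [PartialOrder A] [IsConcreteLE A ι]

theorem finite_Iic_of_finite {X : A} (hX : (X : Set ι).Finite) : (Iic X).Finite :=
  (hX.finite_subsets.preimage coe_injective.injOn).subset fun _ hY => coe_subset_coe.2 hY

theorem exists_minimal_le_of_finite {𝒳 : Set A} (hfin : ∀ X ∈ 𝒳, (X : Set ι).Finite) {X : A}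
    (hX : X ∈ 𝒳) : ∃ Y ≤ X, Minimal (· ∈ 𝒳) Y := by
  obtain ⟨Y, hYX, hY⟩ :=
    ((finite_Iic_of_finite (hfin X hX)).inter_of_right 𝒳).exists_le_minimal ⟨hX, le_rfl⟩
  exact ⟨Y, hYX, hY.prop.1, fun Z hZ hZY => hY.2 ⟨hZ, hZY.trans hYX⟩ hZY⟩

theorem finite_setOf_minimal_of_isClosed {𝒳 : Set A}
    (hclosed : IsClosed {f : ι → Bool | ∃ X ∈ 𝒳, ∀ g, f g = true ↔ g ∈ X})
    (hfin : ∀ X ∈ 𝒳, (X : Set ι).Finite) : {Y | Minimal (· ∈ 𝒳) Y}.Finite := by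
  classical
  let U : A → Set (ι → Bool) := fun Y => (Y : Set ι).pi fun _ => {true}
  have hcover : {f : ι → Bool | ∃ X ∈ 𝒳, ∀ g, f g = true ↔ g ∈ X} ⊆
      ⋃ Y ∈ {Y | Minimal (· ∈ 𝒳) Y}, U Y := by
    rintro f ⟨X, hX, hfX⟩
    obtain ⟨Y, hYX, hY⟩ := exists_minimal_le_of_finite hfin hX
    exact mem_biUnion hY fun g hg => (hfX g).2 (coe_subset_coe.2 hYX hg)
  obtain ⟨t, htM, ht, hKt⟩ := hclosed.isCompact.elim_finite_subcover_image
    (fun Y hY => isOpen_set_pi (hfin Y hY.prop) fun _ _ => isOpen_discrete _) hcover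
  refine ht.subset fun Y hY => ?_
  obtain ⟨Z, hZt, hZY⟩ :=
    mem_iUnion₂.1 (hKt ⟨Y, hY.prop, fun g => decide_eq_true_iff (p := g ∈ Y)⟩)
  rwa [← hY.eq_of_le (htM hZt).prop (coe_subset_coe.1 fun g hg => of_decide_eq_true (hZY g hg))]

end SetLike

theorem stmt_18_general {Γ : Type*} [Group Γ] (𝒳 : Set (Subgroup Γ))
    (hclosed : IsClosed {f : Γ → Bool | ∃ X ∈ 𝒳, ∀ g : Γ, f g = true ↔ g ∈ X})
    (hfin : ∀ X ∈ 𝒳, (X : Set Γ).Finite) :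
    ∃ ℱ : Set (Subgroup Γ), ℱ ⊆ 𝒳 ∧ ℱ.Finite ∧
      (∀ X ∈ 𝒳, ∃ Y ∈ ℱ, Y ≤ X) ∧
      ((∀ X ∈ 𝒳, ∀ g : Γ, Subgroup.map (MulAut.conj g).toMonoidHom X ∈ 𝒳) →
        ∀ Y ∈ ℱ, ∀ g : Γ, Subgroup.map (MulAut.conj g).toMonoidHom Y ∈ ℱ) := by
  refine ⟨{Y | Minimal (· ∈ 𝒳) Y}, fun Y hY => hY.prop,
    SetLike.finite_setOf_minimal_of_isClosed hclosed hfin, fun X hX => ?_, fun hconj Y hY g => ?_⟩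
  · obtain ⟨Y, hYX, hY⟩ := SetLike.exists_minimal_le_of_finite hfin hX
    exact ⟨Y, hY, hYX⟩
  · refine hY.orderIso_apply (MulEquiv.mapSubgroup (MulAut.conj g)) (fun X hX => hconj X hX g)
      fun X hX => ?_
    simpa [← MulAut.inv_def] using hconj X hX g⁻¹

/-- If `𝒳` is a family of finite subgroups of `Γ`, closed in `{0,1}^Γ` and not
containing the trivial subgroup, then there is a finite subfamily `ℱ ⊆ 𝒳` such that
every member of `𝒳` contains some member of `ℱ`; moreover if `𝒳` is conjugation
invariant then `ℱ` can be chosen conjugation invariant. -/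
theorem stmt_18 {Γ : Type*} [Group Γ] (𝒳 : Set (Subgroup Γ))
    (hclosed : IsClosed {f : Γ → Bool | ∃ X ∈ 𝒳, ∀ g : Γ, f g = true ↔ g ∈ X})
    (hfin : ∀ X ∈ 𝒳, (X : Set Γ).Finite)
    (htriv : ⊥ ∉ 𝒳) :
    ∃ ℱ : Set (Subgroup Γ), ℱ ⊆ 𝒳 ∧ ℱ.Finite ∧
      (∀ X ∈ 𝒳, ∃ Y ∈ ℱ, Y ≤ X) ∧
      ((∀ X ∈ 𝒳, ∀ g : Γ, Subgroup.map (MulAut.conj g).toMonoidHom X ∈ 𝒳) →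
        ∀ Y ∈ ℱ, ∀ g : Γ, Subgroup.map (MulAut.conj g).toMonoidHom Y ∈ ℱ) :=
  stmt_18_general 𝒳 hclosed hfin
end

section
/- Let Γ be a group and X₁, …, X_n subgroups of Γ such that each Xᵢ is normal in Γ. Suppose for each i there is an element hᵢ ∈ Γ with hᵢ ≠ e, and suppose 𝒳 is a set of subgroups of Γ such that every X ∈ 𝒳 contains ⟨hᵢ⟩ for some i ≤ n, where ⟨hᵢ⟩ ⊆ Xᵢ. Then the convolution product b = (δ_e − δ_{h₁}) * ⋯ * (δ_e − δ_{h_n}) in ℂ[Γ] satisfies ∑_{k ∈ gX} b(k) = 0 for every g ∈ Γ and every X ∈ 𝒳, provided each X ∈ 𝒳 is normal in Γ. -/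
open scoped Pointwise

theorem finsum_mem_leftCoset_eq_mapDomain_mk {Γ M : Type*} [Group Γ] [AddCommMonoid M]
    (X : Subgroup Γ) (f : Γ →₀ M) (g : Γ) :
    ∑ᶠ k ∈ g • (X : Set Γ), f k = f.mapDomain (QuotientGroup.mk : Γ → Γ ⧸ X) g := by
  classical
  rw [Finsupp.mapDomain_apply_eq_sum, ← QuotientGroup.eq_class_eq_leftCoset]
  exact finsum_mem_eq_sum_of_subset _ (fun k hk => by simp_all) (fun k hk => by simp_all)

namespace MonoidAlgebra

theorem mapDomainRingHom_single_one_sub_single {R M N : Type*} [Ring R] [Monoid M] [Monoid N]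
    (f : M →* N) {h : M} (hf : f h = 1) :
    mapDomainRingHom R f (single 1 1 - single h 1) = 0 := by
  rw [map_sub, mapDomainRingHom_apply, mapDomainRingHom_apply, mapDomain_single,
    mapDomain_single, map_one, hf, sub_self]

end MonoidAlgebra

theorem stmt_19_general {Γ : Type*} [Group Γ] {n : ℕ} (h : Fin n → Γ)
    (𝒳 : Set (Subgroup Γ))
    (hnormal : ∀ X ∈ 𝒳, X.Normal)
    (hcontain : ∀ X ∈ 𝒳, ∃ i, h i ∈ X) :
    ∀ g : Γ, ∀ X ∈ 𝒳,
      ∑ᶠ k ∈ (g • (X : Set Γ)),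
        ((List.ofFn fun i =>
          MonoidAlgebra.single (1 : Γ) (1 : ℂ) - MonoidAlgebra.single (h i) (1 : ℂ)).prod).coeff k
        = 0 := by
  intro g X hX
  obtain ⟨i, hi⟩ := hcontain X hX
  have := hnormal X hX
  let φ := MonoidAlgebra.mapDomainRingHom ℂ (QuotientGroup.mk' X)
  -- Coset sums over `X` are the coefficients of the image in `ℂ[Γ ⧸ X]`, where `δ_e - δ_{hᵢ}` dies.
  have hφ : φ (List.ofFn fun i =>
      MonoidAlgebra.single (1 : Γ) (1 : ℂ) - MonoidAlgebra.single (h i) (1 : ℂ)).prod = 0 := by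
    rw [map_list_prod, List.map_ofFn]
    refine List.prod_eq_zero (List.mem_ofFn.2 ⟨i, ?_⟩)
    exact MonoidAlgebra.mapDomainRingHom_single_one_sub_single _ ((QuotientGroup.eq_one_iff _).2 hi)
  rw [finsum_mem_leftCoset_eq_mapDomain_mk]
  exact congr(($hφ).coeff (g : Γ ⧸ X))

/-- If `h₁, …, h_n` are nontrivial elements with `hᵢ ∈ Xᵢ` for normal subgroups `Xᵢ`,
and every member of a family `𝒳` of normal subgroups contains some `hᵢ`, then the
convolution product `b = (δ_e - δ_{h₁}) * ⋯ * (δ_e - δ_{h_n})` in `ℂ[Γ]` has vanishing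
sums over every coset of every `X ∈ 𝒳`. -/
theorem stmt_19 {Γ : Type*} [Group Γ] {n : ℕ} (h : Fin n → Γ)
    (Xs : Fin n → Subgroup Γ) (hXs : ∀ i, (Xs i).Normal) (hmem : ∀ i, h i ∈ Xs i)
    (hne : ∀ i, h i ≠ 1)
    (𝒳 : Set (Subgroup Γ))
    (hnormal : ∀ X ∈ 𝒳, X.Normal)
    (hcontain : ∀ X ∈ 𝒳, ∃ i, h i ∈ X) :
    ∀ g : Γ, ∀ X ∈ 𝒳,
      ∑ᶠ k ∈ (g • (X : Set Γ)),
        ((List.ofFn fun i =>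
          MonoidAlgebra.single (1 : Γ) (1 : ℂ) - MonoidAlgebra.single (h i) (1 : ℂ)).prod).coeff k
        = 0 :=
  stmt_19_general h 𝒳 hnormal hcontain
end
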